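/- arXiv:2307.03709 — 3 statements merged into one kernel-verified Lean document; each statement's English description precedes it below -/
import Mathlib

section
/- Let H be a real Hilbert space, K ⊆ H a nonempty closed convex set and y₀ ∈ H, and assume that the set S := { p ∈ K : ⟨p, y₀⟩ = sup_{q∈K} ⟨q, y₀⟩ } is nonempty. Let p₀ be the unique element of minimal norm of S, and for λ > 0 let p_{λ,0} be the unique maximizer over K of p ↦ ⟨p, y₀⟩ − (λ/2)‖p‖². Then p_{λ,0} converges strongly to p₀ as λ → 0⁺. -/
open scoped RealInnerProductSpace Topology

set_option maxHeartbeats 1000000 in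
theorem stmt4 {H : Type*} [NormedAddCommGroup H] [InnerProductSpace ℝ H] [CompleteSpace H]
    (K : Set H) (hne : K.Nonempty) (hcl : IsClosed K) (hconv : Convex ℝ K)
    (y₀ : H) (p₀ : H)
    (hp₀ : p₀ ∈ {p ∈ K | ∀ q ∈ K, ⟪q, y₀⟫ ≤ ⟪p, y₀⟫} ∧
      ∀ q ∈ {p ∈ K | ∀ q' ∈ K, ⟪q', y₀⟫ ≤ ⟪p, y₀⟫}, ‖p₀‖ ≤ ‖q‖)
    (p : ℝ → H)
    (hp : ∀ lam : ℝ, 0 < lam → p lam ∈ K ∧ ∀ q ∈ K,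
      ⟪q, y₀⟫ - (lam / 2) * ‖q‖ ^ 2 ≤ ⟪p lam, y₀⟫ - (lam / 2) * ‖p lam‖ ^ 2) :
    Filter.Tendsto p (𝓝[>] (0 : ℝ)) (𝓝 p₀) := by
  obtain ⟨⟨hp₀K, hp₀max⟩, hp₀min⟩ := hp₀
  -- Key strong concavity inequality
  have key : ∀ lam : ℝ, 0 < lam → ∀ q ∈ K,
      ⟪q, y₀⟫ - (lam / 2) * ‖q‖ ^ 2 + (lam / 4) * ‖q - p lam‖ ^ 2
        ≤ ⟪p lam, y₀⟫ - (lam / 2) * ‖p lam‖ ^ 2 := by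
    intro lam hl q hq
    obtain ⟨hmem, hopt⟩ := hp lam hl
    have hmid : (1/2 : ℝ) • q + (1/2 : ℝ) • p lam ∈ K :=
      hconv hq hmem (by norm_num) (by norm_num) (by norm_num)
    have h := hopt _ hmid
    have e1 : ⟪(1/2 : ℝ) • q + (1/2 : ℝ) • p lam, y₀⟫
        = (1/2) * ⟪q, y₀⟫ + (1/2) * ⟪p lam, y₀⟫ := by
      simp [inner_add_left, real_inner_smul_left]
    have e2 : ‖(1/2 : ℝ) • q + (1/2 : ℝ) • p lam‖ ^ 2
        = (1/2) * ‖q‖ ^ 2 + (1/2) * ‖p lam‖ ^ 2 - (1/4) * ‖q - p lam‖ ^ 2 := by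
      have h1 := norm_add_sq_real q (p lam)
      have h2 := norm_sub_sq_real q (p lam)
      have h3 : (1/2 : ℝ) • q + (1/2 : ℝ) • p lam = (1/2 : ℝ) • (q + p lam) := by
        rw [smul_add]
      rw [h3, norm_smul, Real.norm_eq_abs, abs_of_pos (by norm_num : (0:ℝ) < 1/2)]
      nlinarith [h1, h2]
    rw [e1, e2] at h
    nlinarith [h, hl]
  set M : ℝ := ⟪p₀, y₀⟫ with hM
  have hA : ∀ lam : ℝ, 0 < lam →
      ‖p lam‖ ^ 2 ≤ ‖p₀‖ ^ 2 ∧ ‖p lam - p₀‖ ^ 2 ≤ 2 * (‖p₀‖ ^ 2 - ‖p lam‖ ^ 2) := by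
    intro lam hl
    have hk := key lam hl p₀ hp₀K
    have hrev : ‖p₀ - p lam‖ = ‖p lam - p₀‖ := norm_sub_rev _ _
    rw [hrev] at hk
    have hle : ⟪p lam, y₀⟫ ≤ M := hp₀max _ (hp lam hl).1
    constructor <;> nlinarith [sq_nonneg ‖p lam - p₀‖, hk, hle, hl]
  have hmono : ∀ a b : ℝ, 0 < a → a ≤ b →
      ‖p b‖ ^ 2 ≤ ‖p a‖ ^ 2 ∧ ‖p a - p b‖ ^ 2 ≤ 2 * (‖p a‖ ^ 2 - ‖p b‖ ^ 2) := by
    intro a b ha hab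
    rcases eq_or_lt_of_le hab with rfl | hlt
    · simp
    · have hb : 0 < b := ha.trans hlt
      have h1 := key b hb (p a) (hp a ha).1
      have h2 := key a ha (p b) (hp b hb).1
      have hrev : ‖p b - p a‖ = ‖p a - p b‖ := norm_sub_rev _ _
      rw [hrev] at h2
      have hsum : ((b + a)/4) * ‖p a - p b‖^2 ≤ ((b - a)/2) * (‖p a‖^2 - ‖p b‖^2) := by
        nlinarith [h1, h2]
      have hd : 0 ≤ ‖p a - p b‖^2 := sq_nonneg _
      have h3 : ‖p b‖^2 ≤ ‖p a‖^2 := by nlinarith [hsum, hd, ha, hlt]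
      refine ⟨h3, ?_⟩
      nlinarith [hsum, hd, h3, ha, hlt]
  set n : ℝ → ℝ := fun l => ‖p l‖ ^ 2 with hn
  have hbdd : BddAbove (n '' Set.Ioi 0) := by
    refine ⟨‖p₀‖^2, ?_⟩
    rintro x ⟨l, hl, rfl⟩
    exact (hA l hl).1
  have hne' : (n '' Set.Ioi 0).Nonempty := ⟨n 1, 1, by norm_num, rfl⟩
  set L := sSup (n '' Set.Ioi 0) with hL
  have hleL : ∀ l : ℝ, 0 < l → n l ≤ L := fun l hl => le_csSup hbdd ⟨l, hl, rfl⟩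
  have hcauchy : Cauchy (Filter.map p (𝓝[>] (0:ℝ))) := by
    rw [Metric.cauchy_iff]
    refine ⟨Filter.map_neBot, ?_⟩
    intro ε hε
    obtain ⟨x, hx, hxL⟩ : ∃ x ∈ n '' Set.Ioi 0, L - ε^2/4 < x :=
      exists_lt_of_lt_csSup hne' (by nlinarith)
    obtain ⟨l₀, hl₀, rfl⟩ := hx
    have hl₀' : (0:ℝ) < l₀ := hl₀
    have hdist : ∀ a b : ℝ, 0 < a → a ≤ b → b ≤ l₀ → dist (p a) (p b) < ε := by
      intro a b ha hab hbl
      have hb : 0 < b := ha.trans_le hab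
      have h1 := (hmono a b ha hab).2
      have h2 : n l₀ ≤ n b := (hmono b l₀ hb hbl).1
      have h3 : n a ≤ L := hleL a ha
      have h1' : ‖p a - p b‖^2 ≤ 2*(n a - n b) := (hmono a b ha hab).2
      have h4 : ‖p a - p b‖^2 < ε^2/2 := by
        linarith [hxL, h1', h2, h3]
      rw [dist_eq_norm]
      nlinarith [norm_nonneg (p a - p b), hε]
    refine ⟨p '' Set.Ioc 0 l₀, ?_, ?_⟩
    · exact Filter.image_mem_map (Ioc_mem_nhdsGT_of_mem ⟨le_refl 0, hl₀'⟩)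
    · rintro x ⟨a, ha, rfl⟩ y ⟨b, hb, rfl⟩
      rcases le_total a b with h | h
      · exact hdist a b ha.1 h hb.2
      · rw [dist_comm]; exact hdist b a hb.1 h ha.2
  obtain ⟨w, hw⟩ := CompleteSpace.complete hcauchy
  have hwt : Filter.Tendsto p (𝓝[>] (0:ℝ)) (𝓝 w) := hw
  have hmemK : ∀ᶠ l in 𝓝[>] (0:ℝ), p l ∈ K :=
    Filter.eventually_of_mem self_mem_nhdsWithin (fun l hl => (hp l hl).1)
  have hwK : w ∈ K := hcl.mem_of_tendsto hwt hmemK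
  have hcont : Continuous fun x : H => ⟪x, y₀⟫ := continuous_id.inner continuous_const
  have hninner : Filter.Tendsto (fun l => ⟪p l, y₀⟫) (𝓝[>] (0:ℝ)) (𝓝 ⟪w, y₀⟫) :=
    (hcont.tendsto w).comp hwt
  have hIle : ∀ l : ℝ, 0 < l → M - (l/2)*‖p₀‖^2 ≤ ⟪p l, y₀⟫ := by
    intro l hl
    have := (hp l hl).2 p₀ hp₀K
    nlinarith [sq_nonneg ‖p l‖, hl]
  have hIge : ∀ l : ℝ, 0 < l → ⟪p l, y₀⟫ ≤ M := fun l hl => hp₀max _ (hp l hl).1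
  have hMlim : Filter.Tendsto (fun l : ℝ => M - (l/2)*‖p₀‖^2) (𝓝[>] (0:ℝ)) (𝓝 M) := by
    have hc : Continuous (fun l : ℝ => M - (l/2)*‖p₀‖^2) := by fun_prop
    have h0 := (hc.tendsto 0).mono_left (nhdsWithin_le_nhds (s := Set.Ioi (0:ℝ)))
    norm_num at h0
    exact h0
  have hinnerM : Filter.Tendsto (fun l => ⟪p l, y₀⟫) (𝓝[>] (0:ℝ)) (𝓝 M) :=
    tendsto_of_tendsto_of_tendsto_of_le_of_le' hMlim tendsto_const_nhds
      (Filter.eventually_of_mem self_mem_nhdsWithin hIle)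
      (Filter.eventually_of_mem self_mem_nhdsWithin hIge)
  have hwM : ⟪w, y₀⟫ = M := tendsto_nhds_unique hninner hinnerM
  have hwS : w ∈ {p ∈ K | ∀ q' ∈ K, ⟪q', y₀⟫ ≤ ⟪p, y₀⟫} :=
    ⟨hwK, fun q hq => by rw [hwM]; exact hp₀max q hq⟩
  have h1 : ‖p₀‖ ≤ ‖w‖ := hp₀min w hwS
  have hnw : Filter.Tendsto (fun l => ‖p l‖^2) (𝓝[>] (0:ℝ)) (𝓝 (‖w‖^2)) :=
    ((continuous_norm.pow 2).tendsto w).comp hwt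
  have h2 : ‖w‖^2 ≤ ‖p₀‖^2 :=
    le_of_tendsto hnw (Filter.eventually_of_mem self_mem_nhdsWithin fun l hl => (hA l hl).1)
  have heq : ‖w‖^2 = ‖p₀‖^2 := le_antisymm h2 (by nlinarith [norm_nonneg w, norm_nonneg p₀])
  have hub : Filter.Tendsto (fun l => 2*(‖p₀‖^2 - ‖p l‖^2)) (𝓝[>] (0:ℝ)) (𝓝 0) := by
    have h0 : Filter.Tendsto (fun l : ℝ => 2*(‖p₀‖^2 - ‖p l‖^2)) (𝓝[>] (0:ℝ))
        (𝓝 (2*(‖p₀‖^2 - ‖w‖^2))) :=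
      Filter.Tendsto.const_mul 2 (Filter.Tendsto.const_sub _ hnw)
    rw [heq] at h0
    simpa using h0
  have hsq : Filter.Tendsto (fun l => ‖p l - p₀‖^2) (𝓝[>] (0:ℝ)) (𝓝 0) := by
    refine tendsto_of_tendsto_of_tendsto_of_le_of_le' tendsto_const_nhds hub ?_ ?_
    · exact Filter.eventually_of_mem self_mem_nhdsWithin fun l hl => sq_nonneg _
    · exact Filter.eventually_of_mem self_mem_nhdsWithin fun l hl => (hA l hl).2
  have hnormsub : Filter.Tendsto (fun l => ‖p l - p₀‖) (𝓝[>] (0:ℝ)) (𝓝 0) := by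
    have hsqrt := (Real.continuous_sqrt.tendsto 0).comp hsq
    simp only [Function.comp_def, Real.sqrt_zero] at hsqrt
    convert hsqrt using 2 with l
    rw [Real.sqrt_sq (norm_nonneg _)]
  rw [tendsto_iff_norm_sub_tendsto_zero]
  exact hnormsub
end

section
/- Let η ∈ C¹(ℝ²). Let E and F be open sets of ℝ² of class C² such that the signed curvature of E equals η(x) at every point x ∈ ∂E and the signed curvature of F equals η(x) at every point x ∈ ∂F. Then the set { x ∈ ∂E ∩ ∂F : ν_E(x) = ν_F(x) } is both open and closed in ∂E and in ∂F. -/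
/-!
In a `C²` chart `(r, R, u)` at `x` the boundary is the graph of `u`, and computing the curvature
at `x + R (z, u z)` through a second chart turns the curvature condition into the ODE
`u'' = -η (x + R (z, u)) (1 + u'²)^{3/2}`, whose right-hand side is `C¹`. At a common boundary
point with a common normal the charts of `E` and `F` have the same rotation, and both graphs
solve this ODE with `u 0 = u' 0 = 0`; by uniqueness they coincide, so `E = F` near the point,
which gives openness. Closedness holds because the normal `R (-u', 1) / √(1 + u'²)` is continuous
along the boundary.
-/

open MeasureTheory Set
open scoped ENNReal Topology

noncomputable section

abbrev Plane : Type := EuclideanSpace ℝ (Fin 2)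

/-- The point of the plane with coordinates `(z, t)`. -/
def coords (p : ℝ × ℝ) : Plane :=
  p.1 • EuclideanSpace.single (0 : Fin 2) (1 : ℝ) + p.2 • EuclideanSpace.single (1 : Fin 2) (1 : ℝ)

/-- A rotation of the plane: a linear isometry with determinant one. -/
def IsRotation (R : Plane ≃ₗᵢ[ℝ] Plane) : Prop :=
  LinearMap.det (R.toLinearEquiv : Plane →ₗ[ℝ] Plane) = 1

/-- `(r, R, u)` is a `C^k` boundary chart for the set `E` at the boundary point `x`:
in the rotated square of side `2r` centered at `x`, `E` is the hypograph of `u` and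
`∂E` is the graph of `u`. -/
def IsChartAt (k : ℕ∞) (E : Set Plane) (x : Plane) (r : ℝ) (R : Plane ≃ₗᵢ[ℝ] Plane)
    (u : ℝ → ℝ) : Prop :=
  0 < r ∧ IsRotation R ∧ ContDiffOn ℝ k u (Icc (-r) r) ∧ u 0 = 0 ∧ deriv u 0 = 0 ∧
  ∀ p : ℝ × ℝ, p ∈ Ioo (-r) r ×ˢ Ioo (-r) r →
    ((x + R (coords p) ∈ E ↔ p.2 < u p.1) ∧ (x + R (coords p) ∈ frontier E ↔ p.2 = u p.1))

/-- An open subset of the plane, with nonempty boundary, of class `C^k`. -/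
def IsCkSet (k : ℕ∞) (E : Set Plane) : Prop :=
  IsOpen E ∧ (frontier E).Nonempty ∧ ∀ x ∈ frontier E, ∃ r R u, IsChartAt k E x r R u

/-- `ν` is the outward unit normal to `E` at `x` (computed from some `C¹` boundary chart). -/
def HasNormalAt (E : Set Plane) (x ν : Plane) : Prop :=
  ∃ r R u, IsChartAt 1 E x r R u ∧ ν = R (EuclideanSpace.single (1 : Fin 2) (1 : ℝ))

/-- `h` is the signed curvature of `E` at `x` (computed from some `C²` boundary chart). -/
def HasCurvatureAt (E : Set Plane) (x : Plane) (h : ℝ) : Prop :=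
  ∃ r R u, IsChartAt 2 E x r R u ∧ h = -(deriv (deriv u) 0)

local notation "e₀" => EuclideanSpace.single (0 : Fin 2) (1 : ℝ)
local notation "e₁" => EuclideanSpace.single (1 : Fin 2) (1 : ℝ)

namespace Plane

@[simp] lemma coords_apply_zero (p : ℝ × ℝ) : coords p 0 = p.1 := by
  simp [coords]

@[simp] lemma coords_apply_one (p : ℝ × ℝ) : coords p 1 = p.2 := by
  simp [coords]

@[ext] lemma ext {v w : Plane} (h₀ : v 0 = w 0) (h₁ : v 1 = w 1) : v = w := by
  ext i; fin_cases i <;> assumption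

@[simp] lemma coords_apply_self (v : Plane) : coords (v 0, v 1) = v := by
  ext <;> simp

@[simp] lemma coords_zero : coords 0 = 0 := by
  ext <;> simp

lemma coords_zero_one : coords (0, 1) = e₁ := by
  ext <;> simp

lemma coords_add (p q : ℝ × ℝ) : coords (p + q) = coords p + coords q := by
  ext <;> simp

lemma coords_smul (a : ℝ) (p : ℝ × ℝ) : coords (a • p) = a • coords p := by
  ext <;> simp

lemma continuous_coords : Continuous coords := by
  unfold coords; fun_prop

lemma norm_coords_le (p : ℝ × ℝ) : ‖coords p‖ ≤ |p.1| + |p.2| := by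
  refine (norm_add_le _ _).trans ?_
  simp [norm_smul]

lemma norm_sq (v : Plane) : ‖v‖ ^ 2 = v 0 ^ 2 + v 1 ^ 2 := by
  simp [EuclideanSpace.norm_sq_eq, Fin.sum_univ_two]

def frameCoords (x : Plane) (R : Plane ≃ₗᵢ[ℝ] Plane) (w : Plane) : ℝ × ℝ :=
  (R.symm (w - x) 0, R.symm (w - x) 1)

lemma add_frameCoords (x : Plane) (R : Plane ≃ₗᵢ[ℝ] Plane) (w : Plane) :
    x + R (coords (frameCoords x R w)) = w := by
  rw [frameCoords, coords_apply_self, LinearIsometryEquiv.apply_symm_apply, add_sub_cancel]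

lemma frameCoords_self (x : Plane) (R : Plane ≃ₗᵢ[ℝ] Plane) : frameCoords x R x = 0 := by
  simp [frameCoords]

lemma continuous_frameCoords (x : Plane) (R : Plane ≃ₗᵢ[ℝ] Plane) :
    Continuous (frameCoords x R) := by
  unfold frameCoords; fun_prop

lemma det_toLinearEquiv_eq (Q : Plane ≃ₗᵢ[ℝ] Plane) :
    LinearMap.det (Q.toLinearEquiv : Plane →ₗ[ℝ] Plane) = Q e₀ 0 * Q e₁ 1 - Q e₁ 0 * Q e₀ 1 := by
  let b : Module.Basis (Fin 2) ℝ Plane := (EuclideanSpace.basisFun (Fin 2) ℝ).toBasis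
  have hb₀ : b 0 = e₀ := by ext <;> simp [b]
  have hb₁ : b 1 = e₁ := by ext <;> simp [b]
  rw [← LinearMap.det_toMatrix b, Matrix.det_fin_two]
  simp [LinearMap.toMatrix_apply, b, hb₀, hb₁]

lemma sq_add_sq_apply_e₀ (Q : Plane ≃ₗᵢ[ℝ] Plane) : Q e₀ 0 ^ 2 + Q e₀ 1 ^ 2 = 1 := by
  rw [← norm_sq, Q.norm_map]; simp

end Plane

def rotateBy (c σ : ℝ) (q : ℝ × ℝ) : ℝ × ℝ := (q.1 * c - q.2 * σ, q.1 * σ + q.2 * c)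

lemma continuous_rotateBy (c σ : ℝ) : Continuous (rotateBy c σ) := by
  unfold rotateBy; fun_prop

namespace IsRotation

open Plane

variable {Q R R' : Plane ≃ₗᵢ[ℝ] Plane}

lemma apply_e₁ (hQ : IsRotation Q) : Q e₁ = coords (-(Q e₀ 1), Q e₀ 0) := by
  have h₀ := sq_add_sq_apply_e₀ Q
  have h₁ : Q e₁ 0 ^ 2 + Q e₁ 1 ^ 2 = 1 := by rw [← norm_sq, Q.norm_map]; simp
  have horth : Q e₀ 0 * Q e₁ 0 + Q e₀ 1 * Q e₁ 1 = 0 := by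
    have h : inner ℝ (Q e₀) (Q e₁) = 0 := by
      rw [Q.inner_map_map, EuclideanSpace.inner_single_left]; simp
    simp only [PiLp.inner_apply, Fin.sum_univ_two, RCLike.inner_apply, conj_trivial] at h
    linarith
  have hdet : Q e₀ 0 * Q e₁ 1 - Q e₁ 0 * Q e₀ 1 = 1 := by rw [← det_toLinearEquiv_eq]; exact hQ
  ext <;> simp <;> nlinarith [sq_nonneg (Q e₁ 0 + Q e₀ 1), sq_nonneg (Q e₁ 1 - Q e₀ 0)]

lemma apply_coords (hQ : IsRotation Q) (p : ℝ × ℝ) :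
    Q (coords p) = coords (rotateBy (Q e₀ 0) (Q e₀ 1) p) := by
  rw [coords, map_add, Q.map_smul, Q.map_smul, hQ.apply_e₁]
  ext <;> simp [rotateBy]; ring

lemma trans_symm (hR : IsRotation R) (hR' : IsRotation R') : IsRotation (R'.trans R.symm) := by
  rw [IsRotation] at *
  change LinearMap.det ((R.toLinearEquiv.symm : Plane →ₗ[ℝ] Plane) ∘ₗ R'.toLinearEquiv) = 1
  rw [LinearMap.det_comp, LinearEquiv.det_coe_symm, hR, hR', inv_one, one_mul]

lemma ext_of_apply_e₁ (hR : IsRotation R) (hR' : IsRotation R') (h : R e₁ = R' e₁) :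
    R = R' := by
  have h₀ : R e₀ = R' e₀ := by
    have h₁ := congrArg (· 0) h
    have h₂ := congrArg (· 1) h
    simp only [hR.apply_e₁, hR'.apply_e₁, coords_apply_zero, coords_apply_one, neg_inj] at h₁ h₂
    exact Plane.ext h₂ h₁
  refine LinearIsometryEquiv.ext fun w => ?_
  rw [← coords_apply_self w, hR.apply_coords, hR'.apply_coords, h₀]

end IsRotation

open Filter Plane

lemma Filter.EventuallyEq.mem_frontier_iff {X : Type*} [TopologicalSpace X] {s t : Set X}
    {x : X} (h : s =ᶠ[𝓝 x] t) : x ∈ frontier s ↔ x ∈ frontier t := by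
  rw [frontier, frontier, closure_eq_compl_interior_compl, closure_eq_compl_interior_compl,
    Set.mem_sdiff, Set.mem_sdiff, mem_compl_iff, mem_compl_iff, h.mem_interior_iff,
    h.compl.mem_interior_iff]

lemma Ioo_prod_Ioo_mem_nhds_zero {ρ : ℝ} (hρ : 0 < ρ) :
    Ioo (-ρ) ρ ×ˢ Ioo (-ρ) ρ ∈ 𝓝 (0 : ℝ × ℝ) :=
  (isOpen_Ioo.prod isOpen_Ioo).mem_nhds ⟨⟨by simpa, hρ⟩, ⟨by simpa, hρ⟩⟩

lemma Plane.eventually_frameCoords_mem (x : Plane) (R : Plane ≃ₗᵢ[ℝ] Plane) {ρ : ℝ}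
    (hρ : 0 < ρ) : ∀ᶠ w in 𝓝 x, frameCoords x R w ∈ Ioo (-ρ) ρ ×ˢ Ioo (-ρ) ρ := by
  refine (continuous_frameCoords x R).continuousAt.preimage_mem_nhds ?_
  rw [frameCoords_self]
  exact Ioo_prod_Ioo_mem_nhds_zero hρ

lemma Plane.exists_forall_add_coords_mem (x : Plane) (R : Plane ≃ₗᵢ[ℝ] Plane) {N : Set Plane}
    (hN : N ∈ 𝓝 x) {r : ℝ} (hr : 0 < r) :
    ∃ r' ∈ Ioc 0 r, ∀ p ∈ Ioo (-r') r' ×ˢ Ioo (-r') r', x + R (coords p) ∈ N := by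
  obtain ⟨ε, hε, hball⟩ := Metric.mem_nhds_iff.mp hN
  refine ⟨min r (ε / 2), ⟨lt_min hr (half_pos hε), min_le_left _ _⟩, fun p hp => hball ?_⟩
  have h₁ : |p.1| < ε / 2 := (abs_lt.mpr hp.1).trans_le (min_le_right _ _)
  have h₂ : |p.2| < ε / 2 := (abs_lt.mpr hp.2).trans_le (min_le_right _ _)
  rw [Metric.mem_ball, dist_eq_norm, add_sub_cancel_left, R.norm_map]
  linarith [norm_coords_le p]

namespace IsChartAt

variable {k : ℕ∞} {E F : Set Plane} {x : Plane} {r : ℝ} {R : Plane ≃ₗᵢ[ℝ] Plane} {u : ℝ → ℝ}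
  {z : ℝ}

lemma pos (h : IsChartAt k E x r R u) : 0 < r := h.1

lemma isRotation (h : IsChartAt k E x r R u) : IsRotation R := h.2.1

lemma contDiffOn (h : IsChartAt k E x r R u) : ContDiffOn ℝ k u (Icc (-r) r) := h.2.2.1

lemma apply_zero (h : IsChartAt k E x r R u) : u 0 = 0 := h.2.2.2.1

lemma deriv_zero (h : IsChartAt k E x r R u) : deriv u 0 = 0 := h.2.2.2.2.1

lemma mem_iff (h : IsChartAt k E x r R u) {p : ℝ × ℝ} (hp : p ∈ Ioo (-r) r ×ˢ Ioo (-r) r) :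
    x + R (coords p) ∈ E ↔ p.2 < u p.1 :=
  (h.2.2.2.2.2 p hp).1

lemma mem_frontier_iff (h : IsChartAt k E x r R u) {p : ℝ × ℝ}
    (hp : p ∈ Ioo (-r) r ×ˢ Ioo (-r) r) : x + R (coords p) ∈ frontier E ↔ p.2 = u p.1 :=
  (h.2.2.2.2.2 p hp).2

lemma mono {k' : ℕ∞} (h : IsChartAt k E x r R u) (hk : k' ≤ k) : IsChartAt k' E x r R u :=
  ⟨h.1, h.2.1, h.2.2.1.of_le (by exact_mod_cast hk), h.2.2.2⟩

lemma shrink {r' : ℝ} (h : IsChartAt k E x r R u) (hr' : r' ∈ Ioc 0 r) :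
    IsChartAt k E x r' R u := by
  have hsq : Ioo (-r') r' ⊆ Ioo (-r) r := Ioo_subset_Ioo (by linarith [hr'.2]) hr'.2
  exact ⟨hr'.1, h.isRotation, h.contDiffOn.mono (Icc_subset_Icc (by linarith [hr'.2]) hr'.2),
    h.apply_zero, h.deriv_zero, fun p hp => h.2.2.2.2.2 p ⟨hsq hp.1, hsq hp.2⟩⟩

lemma contDiffAt (h : IsChartAt k E x r R u) (hz : z ∈ Ioo (-r) r) : ContDiffAt ℝ k u z :=
  h.contDiffOn.contDiffAt (Icc_mem_nhds hz.1 hz.2)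

lemma hasDerivAt (h : IsChartAt 1 E x r R u) (hz : z ∈ Ioo (-r) r) :
    HasDerivAt u (deriv u z) z :=
  ((h.contDiffAt hz).differentiableAt one_ne_zero).hasDerivAt

lemma zero_mem_Ioo (h : IsChartAt k E x r R u) : (0 : ℝ) ∈ Ioo (-r) r :=
  ⟨neg_neg_of_pos h.pos, h.pos⟩

lemma hasDerivAt_zero (h : IsChartAt 1 E x r R u) : HasDerivAt u 0 0 := by
  simpa [h.deriv_zero] using h.hasDerivAt h.zero_mem_Ioo

lemma contDiffOn_deriv (h : IsChartAt 2 E x r R u) : ContDiffOn ℝ 1 (deriv u) (Ioo (-r) r) :=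
  (h.contDiffOn.mono Ioo_subset_Icc_self).deriv_of_isOpen isOpen_Ioo (by norm_num)

lemma continuousAt_deriv (h : IsChartAt 1 E x r R u) (hz : z ∈ Ioo (-r) r) :
    ContinuousAt (deriv u) z :=
  ((h.contDiffOn.mono Ioo_subset_Icc_self).continuousOn_deriv_of_isOpen isOpen_Ioo
    le_rfl).continuousAt (isOpen_Ioo.mem_nhds hz)

lemma hasDerivAt_deriv (h : IsChartAt 2 E x r R u) (hz : z ∈ Ioo (-r) r) :
    HasDerivAt (deriv u) (deriv (deriv u) z) z :=
  ((h.contDiffOn_deriv.contDiffAt (isOpen_Ioo.mem_nhds hz)).differentiableAt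
    one_ne_zero).hasDerivAt

lemma of_eventuallyEq (h : IsChartAt k E x r R u) (hEF : E =ᶠ[𝓝 x] F) :
    ∃ r', IsChartAt k F x r' R u := by
  have hN : ∀ᶠ w in 𝓝 x, (w ∈ E ↔ w ∈ F) ∧ (w ∈ frontier E ↔ w ∈ frontier F) :=
    (hEF.and hEF.eventually_nhds).mono fun w hw =>
      ⟨Iff.of_eq hw.1, Filter.EventuallyEq.mem_frontier_iff hw.2⟩
  obtain ⟨r', hr', hmem⟩ := exists_forall_add_coords_mem x R hN h.pos
  have h' := h.shrink hr'
  refine ⟨r', hr'.1, h.isRotation, h'.contDiffOn, h.apply_zero, h.deriv_zero, fun p hp => ?_⟩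
  rw [← (hmem p hp).1, ← (hmem p hp).2]
  exact ⟨h'.mem_iff hp, h'.mem_frontier_iff hp⟩

end IsChartAt

section GraphTransition

variable {u v : ℝ → ℝ} {z c σ d : ℝ}

lemma eq_mul_of_graph_eq (hu : HasDerivAt u d z) (hv : HasDerivAt v 0 0) (hv0 : v 0 = 0)
    (h : ∀ᶠ s in 𝓝 (0 : ℝ), u z + (s * σ + v s * c) = u (z + (s * c - v s * σ))) :
    σ = d * c := by
  have hφ : HasDerivAt (fun s => z + (s * c - v s * σ)) c 0 := by
    simpa using (((hasDerivAt_id 0).mul_const c).sub (hv.mul_const σ)).const_add z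
  have hψ : HasDerivAt (fun s => u z + (s * σ + v s * c)) σ 0 := by
    simpa using (((hasDerivAt_id 0).mul_const σ).add (hv.mul_const c)).const_add (u z)
  have hu' : HasDerivAt u d (z + (0 * c - v 0 * σ)) := by simpa [hv0] using hu
  exact hψ.unique ((hu'.comp 0 hφ).congr_of_eventuallyEq h)

lemma pos_of_eventually_lt (hu : HasDerivAt u d z) (hσ : σ = d * c) (hcσ : c ^ 2 + σ ^ 2 = 1)
    (h : ∀ᶠ t in 𝓝[>] (0 : ℝ), u z - t * c < u (z + t * σ)) : 0 < c := by
  have hlin : HasDerivAt (fun t : ℝ => z + t * σ) σ 0 := by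
    simpa using ((hasDerivAt_id (0 : ℝ)).mul_const σ).const_add z
  have hu' : HasDerivAt u d (z + 0 * σ) := by simpa using hu
  have hge : -c ≤ d * σ := by
    refine ge_of_tendsto (hu'.comp 0 hlin).tendsto_slope_zero_right ?_
    filter_upwards [h, self_mem_nhdsWithin] with t ht (htpos : 0 < t)
    simp only [Function.comp_apply, smul_eq_mul, zero_add, zero_mul, add_zero]
    rw [le_inv_mul_iff₀ htpos]
    linarith
  subst hσ
  nlinarith [sq_nonneg d, sq_nonneg c]

lemma eq_inv_sqrt_of_sq_add_sq (hc : 0 < c) (h : c ^ 2 + (d * c) ^ 2 = 1) :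
    c = (√(1 + d ^ 2))⁻¹ := by
  have hc2 : c ^ 2 = (1 + d ^ 2)⁻¹ := eq_inv_of_mul_eq_one_left (by linear_combination h)
  rw [← Real.sqrt_inv, ← hc2, Real.sqrt_sq hc.le]

lemma eventually_deriv_graph_eq (hu : ∀ᶠ w in 𝓝 z, DifferentiableAt ℝ u w)
    (hv : ∀ᶠ s in 𝓝 (0 : ℝ), DifferentiableAt ℝ v s) (hv0 : v 0 = 0)
    (h : ∀ᶠ s in 𝓝 (0 : ℝ), u z + (s * σ + v s * c) = u (z + (s * c - v s * σ))) :
    ∀ᶠ s in 𝓝 (0 : ℝ),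
      σ + deriv v s * c = deriv u (z + (s * c - v s * σ)) * (c - deriv v s * σ) := by
  have hφ : Tendsto (fun s => z + (s * c - v s * σ)) (𝓝 0) (𝓝 z) := by
    have : ContinuousAt (fun s => z + (s * c - v s * σ)) 0 := by
      have := hv.self_of_nhds.continuousAt; fun_prop
    simpa [hv0] using this.tendsto
  have h' : (fun s => u z + (s * σ + v s * c)) =ᶠ[𝓝 0] fun s => u (z + (s * c - v s * σ)) := h
  filter_upwards [h'.deriv, hv, hφ.eventually hu] with s hs hvs hus
  have hψ : HasDerivAt (fun s => u z + (s * σ + v s * c)) (σ + deriv v s * c) s := by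
    simpa using (((hasDerivAt_id s).mul_const σ).add (hvs.hasDerivAt.mul_const c)).const_add (u z)
  have hφs : HasDerivAt (fun s => z + (s * c - v s * σ)) (c - deriv v s * σ) s := by
    simpa using (((hasDerivAt_id s).mul_const c).sub (hvs.hasDerivAt.mul_const σ)).const_add z
  rw [← hψ.deriv, hs]
  exact (hus.hasDerivAt.comp s hφs).deriv

lemma deriv_deriv_eq_of_graph_eq {u₂ v₂ : ℝ} (hu : ∀ᶠ w in 𝓝 z, DifferentiableAt ℝ u w)
    (hu₂ : HasDerivAt (deriv u) u₂ z) (hv : ∀ᶠ s in 𝓝 (0 : ℝ), DifferentiableAt ℝ v s)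
    (hv₂ : HasDerivAt (deriv v) v₂ 0) (hv0 : v 0 = 0) (hv'0 : deriv v 0 = 0)
    (hσ : σ = deriv u z * c) (hcσ : c ^ 2 + σ ^ 2 = 1)
    (h : ∀ᶠ s in 𝓝 (0 : ℝ), u z + (s * σ + v s * c) = u (z + (s * c - v s * σ))) :
    v₂ = u₂ * c ^ 3 := by
  have hv₁ : HasDerivAt v 0 0 := by simpa [hv'0] using hv.self_of_nhds.hasDerivAt
  have hφ : HasDerivAt (fun s => z + (s * c - v s * σ)) c 0 := by
    simpa using (((hasDerivAt_id 0).mul_const c).sub (hv₁.mul_const σ)).const_add z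
  have hu₂' : HasDerivAt (deriv u) u₂ (z + (0 * c - v 0 * σ)) := by simpa [hv0] using hu₂
  have hR : HasDerivAt (fun s => deriv u (z + (s * c - v s * σ)) * (c - deriv v s * σ))
      (u₂ * c * (c - deriv v 0 * σ) + deriv u (z + (0 * c - v 0 * σ)) * -(v₂ * σ)) 0 :=
    (hu₂'.comp 0 hφ).mul (by simpa using (hv₂.mul_const σ).const_sub c)
  have hL : HasDerivAt (fun s => σ + deriv v s * c) (v₂ * c) 0 := by
    simpa using (hv₂.mul_const c).const_add σ
  have key := hL.unique (hR.congr_of_eventuallyEq (eventually_deriv_graph_eq hu hv hv0 h))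
  simp only [hv'0, hv0, zero_mul, sub_zero, add_zero] at key
  subst hσ
  linear_combination c * key - v₂ * hcσ

end GraphTransition

namespace IsChartAt

variable {k k' : ℕ∞} {E : Set Plane} {x : Plane} {r r' : ℝ} {R R' : Plane ≃ₗᵢ[ℝ] Plane}
  {u v : ℝ → ℝ} {z : ℝ}

lemma eventually_transition (hC : IsChartAt k E x r R u) {p : ℝ × ℝ}
    (hp : p ∈ Ioo (-r) r ×ˢ Ioo (-r) r) (hC' : IsChartAt k' E (x + R (coords p)) r' R' v) :
    ∀ᶠ q in 𝓝 (0 : ℝ × ℝ),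
      let p' := p + rotateBy (R.symm (R' e₀) 0) (R.symm (R' e₀) 1) q
      (q.2 < v q.1 ↔ p'.2 < u p'.1) ∧ (q.2 = v q.1 ↔ p'.2 = u p'.1) := by
  set T := fun q => p + rotateBy (R.symm (R' e₀) 0) (R.symm (R' e₀) 1) q
  have hT : ∀ᶠ q in 𝓝 (0 : ℝ × ℝ), T q ∈ Ioo (-r) r ×ˢ Ioo (-r) r := by
    refine (continuous_const.add (continuous_rotateBy _ _)).continuousAt.preimage_mem_nhds ?_
    simpa [T, rotateBy, Prod.mk_zero_zero] using (isOpen_Ioo.prod isOpen_Ioo).mem_nhds hp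
  filter_upwards [Ioo_prod_Ioo_mem_nhds_zero hC'.pos, hT] with q hq hTq
  have hpt : x + R (coords p) + R' (coords q) = x + R (coords (T q)) := by
    have hQ := hC.isRotation.trans_symm hC'.isRotation
    have : R' (coords q) = R ((R'.trans R.symm) (coords q)) := by simp
    rw [this, hQ.apply_coords, add_assoc, ← map_add, ← coords_add]
    rfl
  rw [← hC'.mem_iff hq, ← hC'.mem_frontier_iff hq, hpt]
  exact ⟨hC.mem_iff hTq, hC.mem_frontier_iff hTq⟩

lemma eventually_graph_eq (hC : IsChartAt 1 E x r R u) (hz : z ∈ Ioo (-r) r) (hu : |u z| < r)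
    (hC' : IsChartAt 1 E (x + R (coords (z, u z))) r' R' v) :
    ∀ᶠ s in 𝓝 (0 : ℝ), u z + (s * R.symm (R' e₀) 1 + v s * R.symm (R' e₀) 0)
      = u (z + (s * R.symm (R' e₀) 0 - v s * R.symm (R' e₀) 1)) := by
  have hlim : Tendsto (fun s => (s, v s)) (𝓝 0) (𝓝 0) := by
    simpa [hC'.apply_zero, Prod.mk_zero_zero] using
      (continuousAt_id.prodMk hC'.hasDerivAt_zero.continuousAt).tendsto
  filter_upwards [hlim.eventually (hC.eventually_transition ⟨hz, abs_lt.mp hu⟩ hC')]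
    with s hs
  simpa [rotateBy] using hs.2.mp rfl

lemma eventually_below (hC : IsChartAt 1 E x r R u) (hz : z ∈ Ioo (-r) r) (hu : |u z| < r)
    (hC' : IsChartAt 1 E (x + R (coords (z, u z))) r' R' v) :
    ∀ᶠ t in 𝓝[>] (0 : ℝ), u z - t * R.symm (R' e₀) 0 < u (z + t * R.symm (R' e₀) 1) := by
  have hlim : Tendsto (fun t : ℝ => ((0 : ℝ), -t)) (𝓝[>] 0) (𝓝 0) := by
    have := ((show Continuous fun t : ℝ => ((0 : ℝ), -t) by fun_prop).tendsto 0).mono_left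
      (nhdsWithin_le_nhds (s := Ioi 0))
    rwa [neg_zero, Prod.mk_zero_zero] at this
  filter_upwards [hlim.eventually (hC.eventually_transition ⟨hz, abs_lt.mp hu⟩ hC'),
    self_mem_nhdsWithin] with t ht (htpos : 0 < t)
  have := ht.1.mp (by simpa [hC'.apply_zero] using htpos)
  simp only [rotateBy, Prod.fst_add, Prod.snd_add] at this
  convert this using 2 <;> ring

lemma eventually_differentiableAt (hC : IsChartAt 1 E x r R u) (hz : z ∈ Ioo (-r) r) :
    ∀ᶠ w in 𝓝 z, DifferentiableAt ℝ u w :=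
  eventually_of_mem (isOpen_Ioo.mem_nhds hz) fun _ hw => (hC.hasDerivAt hw).differentiableAt

/-- `(c, σ) = R⁻¹ R' e₀` is the unit tangent of the graph of `u` at `z`, oriented along increasing
`z` because `E` lies below both graphs. -/
lemma transition_coeffs (hC : IsChartAt 1 E x r R u) (hz : z ∈ Ioo (-r) r) (hu : |u z| < r)
    (hC' : IsChartAt 1 E (x + R (coords (z, u z))) r' R' v) :
    R.symm (R' e₀) 1 = deriv u z * R.symm (R' e₀) 0 ∧
      R.symm (R' e₀) 0 = (√(1 + deriv u z ^ 2))⁻¹ := by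
  have hσ := eq_mul_of_graph_eq (hC.hasDerivAt hz) hC'.hasDerivAt_zero hC'.apply_zero
    (hC.eventually_graph_eq hz hu hC')
  have hcσ := sq_add_sq_apply_e₀ (R'.trans R.symm)
  have hc := pos_of_eventually_lt (hC.hasDerivAt hz) hσ hcσ (hC.eventually_below hz hu hC')
  exact ⟨hσ, eq_inv_sqrt_of_sq_add_sq hc (hσ ▸ hcσ)⟩

lemma eq_of_hasNormalAt_graph (hC : IsChartAt 1 E x r R u) (hz : z ∈ Ioo (-r) r)
    (hu : |u z| < r) {ν : Plane} (hν : HasNormalAt E (x + R (coords (z, u z))) ν) :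
    ν = (√(1 + deriv u z ^ 2))⁻¹ • R (coords (-deriv u z, 1)) := by
  obtain ⟨r', R', v, hC', rfl⟩ := hν
  obtain ⟨hσ, hc⟩ := hC.transition_coeffs hz hu hC'
  have hQ := hC.isRotation.trans_symm hC'.isRotation
  have : R' e₁ = R ((R'.trans R.symm) e₁) := by simp
  rw [this, hQ.apply_e₁, ← map_smul, ← coords_smul]
  simp only [LinearIsometryEquiv.trans_apply, hσ, ← hc]
  congr 2
  ext <;> simp [mul_comm]

lemma eq_of_hasNormalAt (hC : IsChartAt 1 E x r R u) {ν : Plane} (hν : HasNormalAt E x ν) :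
    ν = R e₁ := by
  have h0 : x + R (coords (0, u 0)) = x := by simp [hC.apply_zero, Prod.mk_zero_zero]
  have := hC.eq_of_hasNormalAt_graph hC.zero_mem_Ioo (by simpa [hC.apply_zero] using hC.pos)
    (h0.symm ▸ hν)
  simpa [hC.deriv_zero, coords_zero_one] using this

lemma tendsto_normal (hC : IsChartAt 1 E x r R u) {ι : Type*} {l : Filter ι} {y ν : ι → Plane}
    (hy : Tendsto y l (𝓝 x)) (hyE : ∀ i, y i ∈ frontier E)
    (hν : ∀ i, HasNormalAt E (y i) (ν i)) : Tendsto ν l (𝓝 (R e₁)) := by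
  set n : ℝ → Plane := fun z => (√(1 + deriv u z ^ 2))⁻¹ • R (coords (-deriv u z, 1))
  have hn : Tendsto n (𝓝 0) (𝓝 (R e₁)) := by
    have hd := hC.continuousAt_deriv hC.zero_mem_Ioo
    have hscalar : ContinuousAt (fun z => (√(1 + deriv u z ^ 2))⁻¹) 0 :=
      (by fun_prop : ContinuousAt (fun z => √(1 + deriv u z ^ 2)) 0).inv₀ (by positivity)
    have hvec : ContinuousAt (fun z => R (coords (-deriv u z, 1))) 0 :=
      R.continuous.continuousAt.comp (continuous_coords.continuousAt.comp (by fun_prop))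
    have : ContinuousAt n 0 := hscalar.smul hvec
    simpa [n, hC.deriv_zero, coords_zero_one] using this.tendsto
  have hp : Tendsto (fun i => frameCoords x R (y i)) l (𝓝 0) := by
    have := ((continuous_frameCoords x R).tendsto x).comp hy
    rwa [frameCoords_self] at this
  refine (hn.comp ((continuous_fst.tendsto _).comp hp)).congr' ?_
  filter_upwards [hy.eventually (eventually_frameCoords_mem x R hC.pos)] with i hi
  have hgraph := (hC.mem_frontier_iff hi).mp (by rw [add_frameCoords]; exact hyE i)
  have hyi : y i = x + R (coords ((frameCoords x R (y i)).1, u (frameCoords x R (y i)).1)) := by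
    rw [← hgraph, Prod.mk.eta, add_frameCoords]
  exact (hC.eq_of_hasNormalAt_graph hi.1 (abs_lt.mpr (hgraph ▸ hi.2))
    (hyi ▸ hν i)).symm

lemma eq_of_hasCurvatureAt_graph (hC : IsChartAt 2 E x r R u) (hz : z ∈ Ioo (-r) r)
    (hu : |u z| < r) {h : ℝ} (hh : HasCurvatureAt E (x + R (coords (z, u z))) h) :
    deriv (deriv u) z = -h * √(1 + deriv u z ^ 2) ^ 3 := by
  obtain ⟨r', R', v, hC', rfl⟩ := hh
  have hC₁ := hC.mono (k' := 1) (by norm_num)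
  have hC₁' := hC'.mono (k' := 1) (by norm_num)
  obtain ⟨hσ, hc⟩ := hC₁.transition_coeffs hz hu hC₁'
  have key := deriv_deriv_eq_of_graph_eq (hC₁.eventually_differentiableAt hz)
    (hC.hasDerivAt_deriv hz) (hC₁'.eventually_differentiableAt hC'.zero_mem_Ioo)
    (hC'.hasDerivAt_deriv hC'.zero_mem_Ioo) hC'.apply_zero hC'.deriv_zero hσ
    (sq_add_sq_apply_e₀ (R'.trans R.symm)) (hC₁.eventually_graph_eq hz hu hC₁')
  rw [key, hc, neg_neg, inv_pow, mul_assoc, inv_mul_cancel₀ (by positivity), mul_one]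

end IsChartAt

section ODE

lemma eventuallyEq_of_hasDerivAt_of_contDiff {V : Type*} [NormedAddCommGroup V]
    [NormedSpace ℝ V] {G : ℝ × V → V} (hG : ContDiff ℝ 1 G) {f g : ℝ → V} {t₀ : ℝ}
    (hf : ∀ᶠ t in 𝓝 t₀, HasDerivAt f (G (t, f t)) t)
    (hg : ∀ᶠ t in 𝓝 t₀, HasDerivAt g (G (t, g t)) t) (heq : f t₀ = g t₀) :
    f =ᶠ[𝓝 t₀] g := by
  obtain ⟨K, T, hT, hlip⟩ := (hG.contDiffAt (x := (t₀, f t₀))).exists_lipschitzOnWith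
  have hslice : ∀ t, LipschitzOnWith K (fun p => G (t, p)) {p | (t, p) ∈ T} :=
    fun t a ha b hb => by simpa [Prod.edist_eq] using hlip ha hb
  have hmem : ∀ h : ℝ → V, h t₀ = f t₀ → (∀ᶠ t in 𝓝 t₀, HasDerivAt h (G (t, h t)) t) →
      ∀ᶠ t in 𝓝 t₀, HasDerivAt h (G (t, h t)) t ∧ h t ∈ {p | (t, p) ∈ T} := by
    intro h ht₀ hh
    have hcont : ContinuousAt (fun t => (t, h t)) t₀ :=
      continuousAt_id.prodMk hh.self_of_nhds.continuousAt
    exact hh.and (hcont.preimage_mem_nhds (by rwa [ht₀]))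
  exact ODE_solution_unique_of_eventually (Eventually.of_forall hslice) (hmem f rfl hf)
    (hmem g heq.symm hg) heq

lemma eventuallyEq_of_deriv_deriv_eq {F : ℝ × ℝ × ℝ → ℝ} (hF : ContDiff ℝ 1 F)
    {w₁ w₂ : ℝ → ℝ} {t₀ : ℝ}
    (h₁ : ∀ᶠ t in 𝓝 t₀, HasDerivAt w₁ (deriv w₁ t) t ∧
      HasDerivAt (deriv w₁) (F (t, w₁ t, deriv w₁ t)) t)
    (h₂ : ∀ᶠ t in 𝓝 t₀, HasDerivAt w₂ (deriv w₂ t) t ∧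
      HasDerivAt (deriv w₂) (F (t, w₂ t, deriv w₂ t)) t)
    (h₀ : w₁ t₀ = w₂ t₀) (h₀' : deriv w₁ t₀ = deriv w₂ t₀) : w₁ =ᶠ[𝓝 t₀] w₂ := by
  have hG : ContDiff ℝ 1 fun q : ℝ × ℝ × ℝ => (q.2.2, F q) := by fun_prop
  have key := eventuallyEq_of_hasDerivAt_of_contDiff hG
    (h₁.mono fun t ht => ht.1.prodMk ht.2) (h₂.mono fun t ht => ht.1.prodMk ht.2)
    (Prod.ext h₀ h₀')
  exact key.fun_comp Prod.fst

/-- The right-hand side of the equation `u'' = -η (x + R (z, u)) (1 + u'²)^{3/2}` of a graph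
with curvature `η`. -/
def curvatureRHS (η : Plane → ℝ) (x : Plane) (R : Plane ≃ₗᵢ[ℝ] Plane) (q : ℝ × ℝ × ℝ) : ℝ :=
  -η (x + R (coords (q.1, q.2.1))) * √(1 + q.2.2 ^ 2) ^ 3

lemma contDiff_curvatureRHS {η : Plane → ℝ} (hη : ContDiff ℝ 1 η) (x : Plane)
    (R : Plane ≃ₗᵢ[ℝ] Plane) : ContDiff ℝ 1 (curvatureRHS η x R) := by
  have hpt : ContDiff ℝ 1 fun q : ℝ × ℝ × ℝ => x + R (coords (q.1, q.2.1)) := by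
    have := R.contDiff (n := 1); unfold coords; fun_prop
  have hsqrt : ContDiff ℝ 1 fun q : ℝ × ℝ × ℝ => √(1 + q.2.2 ^ 2) :=
    ContDiff.sqrt (by fun_prop) fun q => by positivity
  exact ((hη.comp hpt).neg).mul (hsqrt.pow 3)

variable {η : Plane → ℝ} {E F : Set Plane} {x : Plane} {r : ℝ} {R : Plane ≃ₗᵢ[ℝ] Plane}
  {u : ℝ → ℝ}

lemma IsChartAt.eventually_hasDerivAt_curvatureRHS
    (hcurv : ∀ y ∈ frontier E, HasCurvatureAt E y (η y)) (hC : IsChartAt 2 E x r R u) :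
    ∀ᶠ z in 𝓝 0, HasDerivAt u (deriv u z) z ∧
      HasDerivAt (deriv u) (curvatureRHS η x R (z, u z, deriv u z)) z := by
  have hC₁ := hC.mono (k' := 1) (by norm_num)
  have hsmall : ∀ᶠ z in 𝓝 0, |u z| < r := by
    have := hC₁.hasDerivAt_zero.continuousAt.abs
    exact this.eventually_lt continuousAt_const (by simpa [hC.apply_zero] using hC.pos)
  filter_upwards [isOpen_Ioo.mem_nhds hC.zero_mem_Ioo, hsmall] with z hz hu
  have hfr : x + R (coords (z, u z)) ∈ frontier E :=
    (hC.mem_frontier_iff ⟨hz, abs_lt.mp hu⟩).mpr rfl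
  refine ⟨hC₁.hasDerivAt hz, ?_⟩
  rw [curvatureRHS, ← hC.eq_of_hasCurvatureAt_graph hz hu (hcurv _ hfr)]
  exact hC.hasDerivAt_deriv hz

lemma IsChartAt.eventuallyEq_of_curvature (hη : ContDiff ℝ 1 η)
    (hcurvE : ∀ y ∈ frontier E, HasCurvatureAt E y (η y))
    (hcurvF : ∀ y ∈ frontier F, HasCurvatureAt F y (η y)) {r₁ r₂ : ℝ} {u₁ u₂ : ℝ → ℝ}
    (hE : IsChartAt 2 E x r₁ R u₁) (hF : IsChartAt 2 F x r₂ R u₂) : u₁ =ᶠ[𝓝 0] u₂ :=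
  eventuallyEq_of_deriv_deriv_eq (contDiff_curvatureRHS hη x R)
    (hE.eventually_hasDerivAt_curvatureRHS hcurvE) (hF.eventually_hasDerivAt_curvatureRHS hcurvF)
    (hE.apply_zero.trans hF.apply_zero.symm) (hE.deriv_zero.trans hF.deriv_zero.symm)

end ODE

section SameNormalSet

variable {η : Plane → ℝ} {k : ℕ∞} {E F : Set Plane}

lemma IsCkSet.exists_chart (hE : IsCkSet k E) (hk : 1 ≤ k) {x : Plane}
    (hx : x ∈ frontier E) : ∃ r R u, IsChartAt 1 E x r R u := by
  obtain ⟨r, R, u, hC⟩ := hE.2.2 x hx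
  exact ⟨r, R, u, hC.mono hk⟩

def sameNormalSet (E F : Set Plane) : Set Plane :=
  {x ∈ frontier E ∩ frontier F | ∃ ν, HasNormalAt E x ν ∧ HasNormalAt F x ν}

lemma sameNormalSet_comm : sameNormalSet E F = sameNormalSet F E := by
  ext x
  constructor <;> rintro ⟨⟨hE, hF⟩, ν, hνE, hνF⟩ <;> exact ⟨⟨hF, hE⟩, ν, hνF, hνE⟩

lemma isClosed_sameNormalSet (hk : 1 ≤ k) (hE : IsCkSet k E) (hF : IsCkSet k F) :
    IsClosed (sameNormalSet E F) := by
  refine IsSeqClosed.isClosed fun {xs x₀} hxs hlim => ?_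
  have hxE := isClosed_frontier.mem_of_tendsto hlim (Eventually.of_forall fun n => (hxs n).1.1)
  have hxF := isClosed_frontier.mem_of_tendsto hlim (Eventually.of_forall fun n => (hxs n).1.2)
  obtain ⟨r₁, R₁, u₁, hC₁⟩ := hE.exists_chart hk hxE
  obtain ⟨r₂, R₂, u₂, hC₂⟩ := hF.exists_chart hk hxF
  choose ν hνE hνF using fun n => (hxs n).2
  have hR : R₁ e₁ = R₂ e₁ := tendsto_nhds_unique
    (hC₁.tendsto_normal hlim (fun n => (hxs n).1.1) hνE)
    (hC₂.tendsto_normal hlim (fun n => (hxs n).1.2) hνF)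
  exact ⟨⟨hxE, hxF⟩, R₁ e₁, ⟨r₁, R₁, u₁, hC₁, rfl⟩, ⟨r₂, R₂, u₂, hC₂, hR⟩⟩

lemma eventuallyEq_of_mem_sameNormalSet (hη : ContDiff ℝ 1 η)
    (hHE : ∀ x ∈ frontier E, HasCurvatureAt E x (η x))
    (hHF : ∀ x ∈ frontier F, HasCurvatureAt F x (η x)) {x : Plane}
    (hx : x ∈ sameNormalSet E F) : E =ᶠ[𝓝 x] F := by
  obtain ⟨⟨hxE, hxF⟩, ν, hνE, hνF⟩ := hx
  obtain ⟨r₁, R, u₁, hC₁, -⟩ := hHE x hxE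
  obtain ⟨r₂, R₂, u₂, hC₂, -⟩ := hHF x hxF
  obtain rfl : R = R₂ := hC₁.isRotation.ext_of_apply_e₁ hC₂.isRotation
    (((hC₁.mono (by norm_num)).eq_of_hasNormalAt hνE).symm.trans
      ((hC₂.mono (by norm_num)).eq_of_hasNormalAt hνF))
  obtain ⟨ρ, hρ, hu⟩ := Metric.eventually_nhds_iff_ball.mp
    (hC₁.eventuallyEq_of_curvature hη hHE hHF hC₂)
  set ρ' := min ρ (min r₁ r₂)
  have hsq : ∀ r, ρ' ≤ r → Ioo (-ρ') ρ' ×ˢ Ioo (-ρ') ρ' ⊆ Ioo (-r) r ×ˢ Ioo (-r) r :=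
    fun r h => prod_mono (Ioo_subset_Ioo (neg_le_neg h) h) (Ioo_subset_Ioo (neg_le_neg h) h)
  filter_upwards [eventually_frameCoords_mem x R (lt_min hρ (lt_min hC₁.pos hC₂.pos))]
    with w hw
  have hu₁₂ : u₁ (frameCoords x R w).1 = u₂ (frameCoords x R w).1 := hu _ <| by
    rw [Metric.mem_ball, Real.dist_0_eq_abs]
    exact (abs_lt.mpr hw.1).trans_le (min_le_left _ _)
  change (w ∈ E) = (w ∈ F)
  rw [← add_frameCoords x R w, hC₁.mem_iff (hsq r₁ (by simp [ρ']) hw),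
    hC₂.mem_iff (hsq r₂ (by simp [ρ']) hw), hu₁₂]

lemma mem_sameNormalSet_of_eventuallyEq (hk : 1 ≤ k) (hE : IsCkSet k E) {y : Plane}
    (hy : y ∈ frontier E) (hEF : E =ᶠ[𝓝 y] F) : y ∈ sameNormalSet E F := by
  obtain ⟨r, R, u, hC⟩ := hE.exists_chart hk hy
  obtain ⟨r', hC'⟩ := hC.of_eventuallyEq hEF
  exact ⟨⟨hy, hEF.mem_frontier_iff.mp hy⟩, R e₁, ⟨r, R, u, hC, rfl⟩, ⟨r', R, u, hC', rfl⟩⟩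

lemma isOpen_preimage_sameNormalSet (hη : ContDiff ℝ 1 η) (hk : 1 ≤ k) (hE : IsCkSet k E)
    (hHE : ∀ x ∈ frontier E, HasCurvatureAt E x (η x))
    (hHF : ∀ x ∈ frontier F, HasCurvatureAt F x (η x)) :
    IsOpen (((↑) : frontier E → Plane) ⁻¹' sameNormalSet E F) := by
  have h : ((↑) : frontier E → Plane) ⁻¹' sameNormalSet E F = (↑) ⁻¹' {y | E =ᶠ[𝓝 y] F} :=
    Set.ext fun y => ⟨eventuallyEq_of_mem_sameNormalSet hη hHE hHF,
      mem_sameNormalSet_of_eventuallyEq hk hE y.2⟩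
  rw [h]
  exact isOpen_setOfPred_eventually_nhds.preimage continuous_subtype_val

end SameNormalSet

theorem stmt8 (η : Plane → ℝ) (hη : ContDiff ℝ 1 η)
    (E F : Set Plane) (hE : IsCkSet 2 E) (hF : IsCkSet 2 F)
    (hHE : ∀ x ∈ frontier E, HasCurvatureAt E x (η x))
    (hHF : ∀ x ∈ frontier F, HasCurvatureAt F x (η x)) :
    IsOpen (Subtype.val ⁻¹'
        {x ∈ frontier E ∩ frontier F | ∃ ν, HasNormalAt E x ν ∧ HasNormalAt F x ν} :
        Set (frontier E)) ∧
    IsClosed (Subtype.val ⁻¹'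
        {x ∈ frontier E ∩ frontier F | ∃ ν, HasNormalAt E x ν ∧ HasNormalAt F x ν} :
        Set (frontier E)) ∧
    IsOpen (Subtype.val ⁻¹'
        {x ∈ frontier E ∩ frontier F | ∃ ν, HasNormalAt E x ν ∧ HasNormalAt F x ν} :
        Set (frontier F)) ∧
    IsClosed (Subtype.val ⁻¹'
        {x ∈ frontier E ∩ frontier F | ∃ ν, HasNormalAt E x ν ∧ HasNormalAt F x ν} :
        Set (frontier F)) := by
  change IsOpen (_ ⁻¹' sameNormalSet E F) ∧ IsClosed (_ ⁻¹' sameNormalSet E F) ∧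
    IsOpen (_ ⁻¹' sameNormalSet E F) ∧ IsClosed (_ ⁻¹' sameNormalSet E F)
  have hk : (1 : ℕ∞) ≤ 2 := by norm_num
  have hclosed := isClosed_sameNormalSet hk hE hF
  refine ⟨isOpen_preimage_sameNormalSet hη hk hE hHE hHF,
    hclosed.preimage continuous_subtype_val, ?_, hclosed.preimage continuous_subtype_val⟩
  rw [sameNormalSet_comm]
  exact isOpen_preimage_sameNormalSet hη hk hF hHF hHE

end
end

section
/- Let g : [0,∞) → ℝ be continuous. Define f(r) := (1/r) ∫₀^r g(s) s ds for r > 0, and z : ℝ²∖{0} → ℝ² by z(x) := f(‖x‖) x/‖x‖. Then z is differentiable on ℝ²∖{0} and its divergence satisfies div z(x) = g(‖x‖) for every x ≠ 0. -/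
/-!
Write `z(y) = φ(‖y‖) • y` with `φ(r) = f(r) / r = r⁻² ∫₀ʳ g(s) s ds`. The derivative of such a field
at `x ≠ 0` is `φ(r) • id + φ'(r) ⟪x / r, ·⟫ x` with `r = ‖x‖`, whose trace in `ℝⁿ` is `n φ(r) + r φ'(r)`.
By the fundamental theorem of calculus and the quotient rule, `φ'(r) = g(r) / r - 2 φ(r) / r`, so for
`n = 2` the trace is `g(r)`.
-/

open MeasureTheory Set

noncomputable section

/-- Divergence of a vector field on the plane. -/
def divg (z : Plane → Plane) (x : Plane) : ℝ :=
  ∑ i : Fin 2, fderiv ℝ z x (EuclideanSpace.single i 1) i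

/-- `f(r) = (1/r) ∫₀ʳ g(s) s ds`. -/
def fv (g : ℝ → ℝ) (r : ℝ) : ℝ := (1 / r) * ∫ s in (0 : ℝ)..r, g s * s

/-- The radial vector field `z(x) = f(‖x‖) x / ‖x‖`. -/
def radialField (g : ℝ → ℝ) (x : Plane) : Plane := (fv g ‖x‖ / ‖x‖) • x

section InnerProductSpace

variable {E : Type*} [NormedAddCommGroup E] [InnerProductSpace ℝ E]

theorem hasFDerivAt_norm {x : E} (hx : x ≠ 0) : HasFDerivAt (‖·‖) (‖x‖⁻¹ • innerSL ℝ x) x := by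
  have h := (hasStrictFDerivAt_norm_sq x).hasFDerivAt.sqrt (by positivity)
  simp only [Real.sqrt_sq (norm_nonneg _)] at h
  convert h using 1
  ext v
  simp only [smul_apply, coe_innerSL_apply, smul_eq_mul, nsmul_eq_mul, Nat.cast_ofNat]
  field_simp

theorem hasFDerivAt_comp_norm {φ : ℝ → ℝ} {φ' : ℝ} {x : E} (hx : x ≠ 0)
    (hφ : HasDerivAt φ φ' ‖x‖) :
    HasFDerivAt (fun y => φ ‖y‖) ((φ' * ‖x‖⁻¹) • innerSL ℝ x) x := by
  rw [← smul_smul]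
  exact hφ.comp_hasFDerivAt x (hasFDerivAt_norm hx)

end InnerProductSpace

theorem sum_fderiv_smul_self_single_apply {n : ℕ} {ψ : EuclideanSpace ℝ (Fin n) → ℝ}
    {ψ' : EuclideanSpace ℝ (Fin n) →L[ℝ] ℝ} {x : EuclideanSpace ℝ (Fin n)}
    (hψ : HasFDerivAt ψ ψ' x) :
    ∑ i, fderiv ℝ (fun y => ψ y • y) x (EuclideanSpace.single i 1) i = n * ψ x + ψ' x := by
  have hz : HasFDerivAt (fun y => ψ y • y) (ψ x • .id ℝ _ + ψ'.smulRight x) x :=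
    hψ.smul (hasFDerivAt_id x)
  rw [hz.fderiv]
  have hψ'x : ψ' x = ∑ i, ψ' (EuclideanSpace.single i 1) * x i := by
    conv_lhs => rw [← (EuclideanSpace.basisFun (Fin n) ℝ).sum_repr x]
    simp [mul_comm]
  simp [hψ'x, Finset.sum_add_distrib, mul_comm]

theorem sum_fderiv_radial_single_apply {n : ℕ} {φ : ℝ → ℝ} {φ' : ℝ}
    {x : EuclideanSpace ℝ (Fin n)} (hx : x ≠ 0) (hφ : HasDerivAt φ φ' ‖x‖) :
    ∑ i, fderiv ℝ (fun y => φ ‖y‖ • y) x (EuclideanSpace.single i 1) i =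
      n * φ ‖x‖ + ‖x‖ * φ' := by
  rw [sum_fderiv_smul_self_single_apply (hasFDerivAt_comp_norm hx hφ)]
  have hr : ‖x‖ ≠ 0 := norm_ne_zero_iff.mpr hx
  simp only [smul_apply, coe_innerSL_apply, real_inner_self_eq_norm_sq,
    smul_eq_mul]
  field_simp

theorem hasDerivAt_integral_of_continuousOn_Ici {h : ℝ → ℝ} {a r : ℝ}
    (hh : ContinuousOn h (Ici a)) (hr : a < r) :
    HasDerivAt (fun t => ∫ s in a..t, h s) (h r) r :=
  intervalIntegral.integral_hasDerivAt_right
    ((hh.mono (by simp [uIcc_of_le hr.le, Icc_subset_Ici_self])).intervalIntegrable)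
    ((hh.mono Ioi_subset_Ici_self).stronglyMeasurableAtFilter isOpen_Ioi r hr)
    (hh.continuousAt (Ici_mem_nhds hr))

theorem hasDerivAt_fv_div_self {g : ℝ → ℝ} (hg : ContinuousOn g (Ici 0)) {r : ℝ} (hr : 0 < r) :
    HasDerivAt (fun t => fv g t / t) (g r / r - 2 * fv g r / r ^ 2) r := by
  have hF : HasDerivAt (fun t => ∫ s in (0 : ℝ)..t, g s * s) (g r * r) r :=
    hasDerivAt_integral_of_continuousOn_Ici (hg.mul continuousOn_id) hr
  have hquot : (fun t => fv g t / t) = fun t => (∫ s in (0 : ℝ)..t, g s * s) / t ^ 2 := by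
    funext t
    simp only [fv]
    ring
  rw [hquot]
  refine (hF.div (hasDerivAt_pow 2 r) (by positivity)).congr_deriv ?_
  simp only [fv]
  field_simp
  ring

theorem stmt13 (g : ℝ → ℝ) (hg : ContinuousOn g (Ici 0)) (x : Plane) (hx : x ≠ 0) :
    DifferentiableAt ℝ (radialField g) x ∧ divg (radialField g) x = g ‖x‖ := by
  have hr : 0 < ‖x‖ := norm_pos_iff.mpr hx
  have hφ := hasDerivAt_fv_div_self hg hr
  refine ⟨((hasFDerivAt_comp_norm hx hφ).smul (hasFDerivAt_id x)).differentiableAt, ?_⟩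
  calc divg (radialField g) x
      = 2 * (fv g ‖x‖ / ‖x‖) + ‖x‖ * (g ‖x‖ / ‖x‖ - 2 * fv g ‖x‖ / ‖x‖ ^ 2) :=
        sum_fderiv_radial_single_apply hx hφ
    _ = g ‖x‖ := by field_simp; ring

end
end
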